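/- arXiv:0903.3960 — 2 statements merged into one kernel-verified Lean document; each statement's English description precedes it below -/
import Mathlib

section
/- Let A be an n×n definite matrix over the max-times semiring. A nonzero vector x satisfies A⊗x ≤ x (i.e., max_j a_{ij}x_j ≤ x_i for all i) if and only if x is a max-linear combination of the columns of the Kleene star A*, i.e., x = ⊕_{i=1}^n α_i A*_{·i} for some nonnegative scalars α_i. -/
open scoped NNReal

/-- Max-times matrix product. -/
def mmul {n : ℕ} (A B : Matrix (Fin n) (Fin n) ℝ≥0) : Matrix (Fin n) (Fin n) ℝ≥0 :=
  fun i j => Finset.univ.sup (fun k => A i k * B k j)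

/-- Max-algebraic identity matrix. -/
def mId {n : ℕ} : Matrix (Fin n) (Fin n) ℝ≥0 :=
  fun i j => if i = j then 1 else 0

/-- Max-algebraic matrix power. -/
def mpow {n : ℕ} (A : Matrix (Fin n) (Fin n) ℝ≥0) : ℕ → Matrix (Fin n) (Fin n) ℝ≥0
  | 0 => mId
  | k + 1 => mmul (mpow A k) A

/-- Maximum cycle geometric mean, via the trace formula
`λ(A) = ⊕_{k=1}^n (Tr_⊕ A^k)^{1/k}`. -/
noncomputable def lam {n : ℕ} (A : Matrix (Fin n) (Fin n) ℝ≥0) : ℝ≥0 :=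
  Finset.sup (Finset.range n) (fun k =>
    (Finset.univ.sup (fun i => mpow A (k + 1) i i)) ^ ((1 : ℝ) / (k + 1)))

/-- Kleene star `A* = I ⊕ A ⊕ A² ⊕ ... ⊕ A^{n-1}`. -/
def kstar {n : ℕ} (A : Matrix (Fin n) (Fin n) ℝ≥0) : Matrix (Fin n) (Fin n) ℝ≥0 :=
  fun i j => Finset.sup (Finset.range n) (fun k => mpow A k i j)

/-- Max-algebraic action of a matrix on a vector. -/
def mvec {n : ℕ} (A : Matrix (Fin n) (Fin n) ℝ≥0) (x : Fin n → ℝ≥0) : Fin n → ℝ≥0 :=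
  fun i => Finset.univ.sup (fun j => A i j * x j)

lemma mpow_one' {n : ℕ} (A : Matrix (Fin n) (Fin n) ℝ≥0) (i j : Fin n) :
    mpow A 1 i j = A i j := by
  show Finset.univ.sup (fun k => mId i k * A k j) = A i j
  apply le_antisymm
  · exact Finset.sup_le fun k _ => by by_cases h : i = k <;> simp [mId, h]
  · calc A i j = mId i i * A i j := by simp [mId]
      _ ≤ _ := Finset.le_sup (f := fun k => mId i k * A k j) (Finset.mem_univ i)

lemma mpow_add_le {n : ℕ} (A : Matrix (Fin n) (Fin n) ℝ≥0) (a b : ℕ) (i k j : Fin n) :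
    mpow A a i k * mpow A b k j ≤ mpow A (a + b) i j := by
  induction b generalizing j with
  | zero => by_cases h : k = j <;> simp [mpow, mId, h]
  | succ b ih =>
    show mpow A a i k * Finset.univ.sup (fun l => mpow A b k l * A l j) ≤
      Finset.univ.sup (fun l => mpow A (a + b) i l * A l j)
    rw [NNReal.mul_finset_sup]
    refine Finset.sup_le fun l _ => ?_
    calc mpow A a i k * (mpow A b k l * A l j)
        = (mpow A a i k * mpow A b k l) * A l j := (mul_assoc _ _ _).symm
      _ ≤ mpow A (a + b) i l * A l j := mul_le_mul_left (ih l) _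
      _ ≤ _ := Finset.le_sup (f := fun l => mpow A (a + b) i l * A l j) (Finset.mem_univ l)

lemma prod_seg_le {n : ℕ} (A : Matrix (Fin n) (Fin n) ℝ≥0) (p : ℕ → Fin n) (d a : ℕ) :
    ∏ t ∈ Finset.Ico a (a + d), A (p t) (p (t + 1)) ≤ mpow A d (p a) (p (a + d)) := by
  induction d with
  | zero => simp [mpow, mId]
  | succ d ih =>
    rw [show a + (d + 1) = (a + d) + 1 by ring,
      Finset.prod_Ico_succ_top (Nat.le_add_right a d)]
    calc (∏ t ∈ Finset.Ico a (a + d), A (p t) (p (t + 1))) * A (p (a + d)) (p (a + d + 1))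
        ≤ mpow A d (p a) (p (a + d)) * A (p (a + d)) (p (a + d + 1)) := mul_le_mul_left ih _
      _ ≤ _ := Finset.le_sup (f := fun k => mpow A d (p a) k * A k (p (a + d + 1)))
          (Finset.mem_univ (p (a + d)))

lemma exists_path {n : ℕ} (A : Matrix (Fin n) (Fin n) ℝ≥0) :
    ∀ m (i j : Fin n), mpow A m i j ≠ 0 →
    ∃ p : ℕ → Fin n, p 0 = i ∧ p m = j ∧
      mpow A m i j ≤ ∏ t ∈ Finset.range m, A (p t) (p (t + 1)) := by
  intro m
  induction m with
  | zero =>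
    intro i j h
    have hij : i = j := by by_contra h'; simp [mpow, mId, h'] at h
    subst hij
    exact ⟨fun _ => i, rfl, rfl, by simp [mpow, mId]⟩
  | succ m ih =>
    intro i j h
    have hne : (Finset.univ : Finset (Fin n)).Nonempty := ⟨i, Finset.mem_univ i⟩
    obtain ⟨k, -, hk⟩ := Finset.exists_mem_eq_sup Finset.univ hne
      (fun k => mpow A m i k * A k j)
    have hval : mpow A (m + 1) i j = mpow A m i k * A k j := hk
    have hm : mpow A m i k ≠ 0 := by
      intro h0; rw [hval, h0, zero_mul] at h; exact h rfl
    obtain ⟨p, hp0, hpm, hple⟩ := ih i k hm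
    refine ⟨fun t => if t ≤ m then p t else j, by simpa using hp0, by simp, ?_⟩
    rw [Finset.prod_range_succ]
    have hprod : ∏ t ∈ Finset.range m,
        A (if t ≤ m then p t else j) (if t + 1 ≤ m then p (t + 1) else j)
        = ∏ t ∈ Finset.range m, A (p t) (p (t + 1)) := by
      refine Finset.prod_congr rfl fun t ht => ?_
      have htm : t < m := Finset.mem_range.mp ht
      rw [if_pos (show t ≤ m by omega), if_pos (show t + 1 ≤ m by omega)]
    simp only [hprod]
    rw [if_pos (le_refl m), if_neg (by omega), hpm, hval]
    exact mul_le_mul_left hple _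

lemma mpow_n_le_kstar {n : ℕ} (A : Matrix (Fin n) (Fin n) ℝ≥0)
    (htr : ∀ ℓ, 1 ≤ ℓ → ℓ ≤ n → ∀ k, mpow A ℓ k k ≤ 1) (i j : Fin n) :
    mpow A n i j ≤ kstar A i j := by
  by_cases h0 : mpow A n i j = 0
  · simp [h0]
  obtain ⟨p, hp0, hpn, hle⟩ := exists_path A n i j h0
  obtain ⟨a, b, hab, heq⟩ := Fintype.exists_ne_map_eq_of_card_lt
    (fun r : Fin (n + 1) => p r) (by simp)
  -- wlog a < b
  obtain ⟨s, t, hst, hpq⟩ : ∃ s t : Fin (n + 1), (s : ℕ) < (t : ℕ) ∧ p s = p t := by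
    rcases lt_or_gt_of_ne hab with h | h
    · exact ⟨a, b, h, heq⟩
    · exact ⟨b, a, h, heq.symm⟩
  set sN := (s : ℕ); set tN := (t : ℕ)
  have hsn : sN < tN := hst
  have htn : tN ≤ n := Nat.lt_succ_iff.mp t.isLt
  have hsplit : ∏ x ∈ Finset.range n, A (p x) (p (x + 1)) =
      (∏ x ∈ Finset.Ico 0 sN, A (p x) (p (x + 1))) *
      (∏ x ∈ Finset.Ico sN tN, A (p x) (p (x + 1))) *
      (∏ x ∈ Finset.Ico tN n, A (p x) (p (x + 1))) := by
    rw [Finset.prod_Ico_consecutive _ (Nat.zero_le sN) (le_of_lt hsn),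
      Finset.prod_Ico_consecutive _ (Nat.zero_le tN) htn,
      ← Finset.range_eq_Ico]
  have h1 : ∏ x ∈ Finset.Ico 0 sN, A (p x) (p (x + 1)) ≤ mpow A sN i (p sN) := by
    have := prod_seg_le A p sN 0
    simpa [hp0] using this
  have h2 : ∏ x ∈ Finset.Ico sN tN, A (p x) (p (x + 1)) ≤ 1 := by
    have hseg := prod_seg_le A p (tN - sN) sN
    rw [Nat.add_sub_cancel' (le_of_lt hsn)] at hseg
    calc ∏ x ∈ Finset.Ico sN tN, A (p x) (p (x + 1)) ≤ mpow A (tN - sN) (p sN) (p tN) := hseg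
      _ = mpow A (tN - sN) (p sN) (p sN) := by rw [← hpq]
      _ ≤ 1 := htr (tN - sN) (by omega) (by omega) (p sN)
  have h3 : ∏ x ∈ Finset.Ico tN n, A (p x) (p (x + 1)) ≤ mpow A (n - tN) (p sN) j := by
    have hseg := prod_seg_le A p (n - tN) tN
    rw [Nat.add_sub_cancel' htn] at hseg
    rw [← hpq] at hseg
    simpa [hpn] using hseg
  have hfinal : mpow A n i j ≤ mpow A (sN + (n - tN)) i j := by
    calc mpow A n i j ≤ _ := hle
      _ = _ := hsplit
      _ ≤ mpow A sN i (p sN) * 1 * mpow A (n - tN) (p sN) j :=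
        mul_le_mul (mul_le_mul h1 h2 zero_le zero_le) h3 zero_le zero_le
      _ = mpow A sN i (p sN) * mpow A (n - tN) (p sN) j := by rw [mul_one]
      _ ≤ mpow A (sN + (n - tN)) i j := mpow_add_le A sN (n - tN) i (p sN) j
  refine hfinal.trans (Finset.le_sup (f := fun k => mpow A k i j) (Finset.mem_range.mpr ?_))
  omega

/-- For a definite matrix A, a nonzero vector x is a subeigenvector (A ⊗ x ≤ x)
iff x is a max-linear combination of the columns of the Kleene star A*. -/
theorem subeigencone_eq_span_kstar {n : ℕ} (A : Matrix (Fin n) (Fin n) ℝ≥0)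
    (hA : lam A = 1) (x : Fin n → ℝ≥0) (hx : x ≠ 0) :
    (∀ i, Finset.univ.sup (fun j => A i j * x j) ≤ x i) ↔
      ∃ α : Fin n → ℝ≥0, ∀ i, x i = Finset.univ.sup (fun j => α j * kstar A i j) := by
  have htr : ∀ ℓ, 1 ≤ ℓ → ℓ ≤ n → ∀ k, mpow A ℓ k k ≤ 1 := by
    intro ℓ h1 h2 k
    have hmem : ℓ - 1 ∈ Finset.range n := Finset.mem_range.mpr (by omega)
    have hle := Finset.le_sup (f := fun k =>
      (Finset.univ.sup (fun i => mpow A (k + 1) i i)) ^ ((1 : ℝ) / (k + 1))) hmem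
    have hle' := hle.trans hA.le
    have hℓ1 : ℓ - 1 + 1 = ℓ := by omega
    have hc : ((ℓ - 1 : ℕ) : ℝ) + 1 = (ℓ : ℝ) := by
      exact_mod_cast congrArg (fun m : ℕ => (m : ℝ)) hℓ1
    simp only [hℓ1, hc] at hle'
    set a := Finset.univ.sup (fun i => mpow A ℓ i i) with ha
    have hℓ0 : (ℓ : ℝ) ≠ 0 := by
      exact_mod_cast (show ℓ ≠ 0 by omega)
    have haa : a = (a ^ ((1 : ℝ) / ℓ)) ^ (ℓ : ℝ) := by
      rw [← NNReal.rpow_mul, one_div, inv_mul_cancel₀ hℓ0, NNReal.rpow_one]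
    have hone : a ≤ 1 := by
      rw [haa]
      calc (a ^ ((1 : ℝ) / ℓ)) ^ (ℓ : ℝ) ≤ (1 : ℝ≥0) ^ (ℓ : ℝ) :=
            NNReal.rpow_le_rpow hle' (by positivity)
        _ = 1 := NNReal.one_rpow _
    exact le_trans (Finset.le_sup (f := fun i => mpow A ℓ i i) (Finset.mem_univ k)) hone
  constructor
  · intro hsub
    have key : ∀ m (i j : Fin n), mpow A m i j * x j ≤ x i := by
      intro m
      induction m with
      | zero => intro i j; by_cases h : i = j <;> simp [mpow, mId, h]
      | succ m ih =>
        intro i j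
        show Finset.univ.sup (fun l => mpow A m i l * A l j) * x j ≤ x i
        rw [mul_comm, NNReal.mul_finset_sup]
        refine Finset.sup_le fun l _ => ?_
        calc x j * (mpow A m i l * A l j) = mpow A m i l * (A l j * x j) := by ring
          _ ≤ mpow A m i l * x l :=
              mul_le_mul_right (le_trans (Finset.le_sup (Finset.mem_univ j)) (hsub l)) _
          _ ≤ x i := ih i l
    refine ⟨x, fun i => ?_⟩
    apply le_antisymm
    · have hkii : (1 : ℝ≥0) ≤ kstar A i i := by
        have h0 : 0 ∈ Finset.range n := Finset.mem_range.mpr i.pos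
        calc (1 : ℝ≥0) = mpow A 0 i i := by simp [mpow, mId]
          _ ≤ kstar A i i := Finset.le_sup (f := fun k => mpow A k i i) h0
      calc x i = x i * 1 := (mul_one _).symm
        _ ≤ x i * kstar A i i := mul_le_mul_right hkii _
        _ ≤ _ := Finset.le_sup (f := fun j => x j * kstar A i j) (Finset.mem_univ i)
    · refine Finset.sup_le fun j _ => ?_
      show x j * Finset.sup (Finset.range n) (fun k => mpow A k i j) ≤ x i
      rw [NNReal.mul_finset_sup]
      refine Finset.sup_le fun k _ => ?_
      rw [mul_comm]
      exact key k i j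
  · rintro ⟨α, hα⟩ i
    refine Finset.sup_le fun j _ => ?_
    rw [hα j, NNReal.mul_finset_sup, hα i]
    refine Finset.sup_le fun l _ => ?_
    refine le_trans ?_ (Finset.le_sup (f := fun j => α j * kstar A i j) (Finset.mem_univ l))
    have hAk : A i j * kstar A j l ≤ kstar A i l := by
      show A i j * Finset.sup (Finset.range n) (fun k => mpow A k j l) ≤ kstar A i l
      rw [NNReal.mul_finset_sup]
      refine Finset.sup_le fun k hk => ?_
      have hk' : k < n := Finset.mem_range.mp hk
      calc A i j * mpow A k j l = mpow A 1 i j * mpow A k j l := by rw [mpow_one']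
        _ ≤ mpow A (1 + k) i l := mpow_add_le A 1 k i j l
        _ ≤ kstar A i l := by
            rcases lt_or_eq_of_le (Nat.succ_le_of_lt hk' : k + 1 ≤ n) with h | h
            · rw [Nat.add_comm 1 k]
              exact Finset.le_sup (f := fun m => mpow A m i l)
                (Finset.mem_range.mpr h)
            · have hn : 1 + k = n := by omega
              rw [hn]
              exact mpow_n_le_kstar A htr i l
    calc A i j * (α l * kstar A j l) = α l * (A i j * kstar A j l) := by ring
      _ ≤ α l * kstar A i l := mul_le_mul_right hAk _
end

section
/- Let A be an n×n matrix over the max-times semiring that is irreducible and definite, and suppose for some s ≥ T and t ≥ 1 the vector x satisfies A^s⊗x = A^{s+t}⊗x, where T is such that the powers of A are periodic (A^{r+γ} = A^r for all r ≥ T, with γ the ultimate period). Then A^k⊗x = A^{k+t}⊗x for every k ≥ T. -/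
open scoped NNReal

lemma mmul_assoc' {n : ℕ} (A B C : Matrix (Fin n) (Fin n) ℝ≥0) :
    mmul (mmul A B) C = mmul A (mmul B C) := by
  funext i j
  simp only [mmul, NNReal.finset_sup_mul, NNReal.mul_finset_sup]
  rw [Finset.sup_comm]
  simp [mul_assoc]

lemma mmul_mId' {n : ℕ} (A : Matrix (Fin n) (Fin n) ℝ≥0) : mmul A mId = A := by
  funext i j
  apply le_antisymm
  · apply Finset.sup_le; intro k _
    by_cases h : k = j <;> simp [mId, h]
  · refine le_trans (le_of_eq ?_) (Finset.le_sup (f := fun k => A i k * mId k j) (Finset.mem_univ j))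
    simp [mId]

lemma mId_mmul' {n : ℕ} (A : Matrix (Fin n) (Fin n) ℝ≥0) : mmul mId A = A := by
  funext i j
  apply le_antisymm
  · apply Finset.sup_le; intro k _
    by_cases h : i = k <;> simp [mId, h]
  · refine le_trans (le_of_eq ?_) (Finset.le_sup (f := fun k => mId i k * A k j) (Finset.mem_univ i))
    simp [mId]

lemma mpow_succ' {n : ℕ} (A : Matrix (Fin n) (Fin n) ℝ≥0) (k : ℕ) :
    mpow A (k + 1) = mmul A (mpow A k) := by
  induction k with
  | zero => show mmul (mpow A 0) A = _; simp [mpow, mId_mmul', mmul_mId']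
  | succ k ih =>
      show mmul (mpow A (k + 1)) A = mmul A (mmul (mpow A k) A)
      rw [ih, mmul_assoc']

lemma mvec_mmul' {n : ℕ} (A B : Matrix (Fin n) (Fin n) ℝ≥0) (x : Fin n → ℝ≥0) :
    mvec (mmul A B) x = mvec A (mvec B x) := by
  funext i
  simp only [mvec, mmul, NNReal.finset_sup_mul, NNReal.mul_finset_sup]
  rw [Finset.sup_comm]
  simp [mul_assoc]

lemma mvec_succ' {n : ℕ} (A : Matrix (Fin n) (Fin n) ℝ≥0) (k : ℕ) (x : Fin n → ℝ≥0) :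
    mvec (mpow A (k + 1)) x = mvec A (mvec (mpow A k) x) := by
  rw [mpow_succ', mvec_mmul']

/-- If the powers of an irreducible definite matrix A are periodic with period γ
after time T, and A^s ⊗ x = A^{s+t} ⊗ x for some s ≥ T, then
A^k ⊗ x = A^{k+t} ⊗ x for every k ≥ T. -/
theorem attraction_system_equivalence {n : ℕ} (A : Matrix (Fin n) (Fin n) ℝ≥0)
    (hirr : ∀ i j : Fin n, ∃ k : ℕ, 1 ≤ k ∧ 0 < mpow A k i j)
    (hdef : lam A = 1)
    (T γ : ℕ) (hγ : 1 ≤ γ) (hT : 1 ≤ T)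
    (hper : ∀ r : ℕ, T ≤ r → mpow A (r + γ) = mpow A r)
    (x : Fin n → ℝ≥0) (s t : ℕ) (hs : T ≤ s) (ht : 1 ≤ t)
    (hx : mvec (mpow A s) x = mvec (mpow A (s + t)) x) :
    ∀ k : ℕ, T ≤ k → mvec (mpow A k) x = mvec (mpow A (k + t)) x := by
  
  have hper' : ∀ r : ℕ, T ≤ r → ∀ N : ℕ, mpow A (r + N * γ) = mpow A r := by
    intro r hr N
    induction N with
    | zero => simp
    | succ N ih =>
        have : r + (N + 1) * γ = (r + N * γ) + γ := by ring
        rw [this, hper (r + N * γ) (le_trans hr (Nat.le_add_right _ _)), ih]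
  have key : ∀ m : ℕ, mvec (mpow A (s + m)) x = mvec (mpow A (s + m + t)) x := by
    intro m
    induction m with
    | zero => simpa using hx
    | succ m ih =>
        have e1 : s + (m + 1) = (s + m) + 1 := by ring
        have e2 : s + m + 1 + t = (s + m + t) + 1 := by ring
        rw [e1, e2, mvec_succ', mvec_succ', ih]
  intro k hk
  have hsk : s ≤ k + s * γ :=
    le_trans (Nat.le_mul_of_pos_right s hγ) (Nat.le_add_left _ _)
  obtain ⟨m, hm⟩ := Nat.exists_eq_add_of_le hsk
  have h1 : mpow A (k + s * γ) = mpow A k := hper' k hk s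
  have h2 : mpow A (k + t + s * γ) = mpow A (k + t) :=
    hper' (k + t) (le_trans hk (Nat.le_add_right _ _)) s
  calc mvec (mpow A k) x = mvec (mpow A (s + m)) x := by rw [← h1, hm]
    _ = mvec (mpow A (s + m + t)) x := key m
    _ = mvec (mpow A (k + t)) x := by
        have e : s + m + t = k + t + s * γ := by omega
        rw [e, h2]
end
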